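/- Let G = (V,E) be a finite directed graph on n nodes, let γ: V → ℝ assign a dynamic value to each node, and let P_1,…,P_k be the partition of V into level sets of γ. Let G_i = (V, E_i) where E_i consists of edges of G starting in P_i. Then ν(G) ≤ Σ_{i=1}^k ν(G_i) ≤ n − |S(G)|, where S(G) is the set of sinks of G. Moreover, if γ is constant then Σ_i ν(G_i) = ν(G), and if γ is injective then Σ_i ν(G_i) = n − |S(G)|. -/

import Mathlib

/-!
Splitting a maximum matching of `G` along the blocks `P_i` gives matchings of the `G_i`, so
`ν(G) ≤ Σ ν(G_i)`. A matching uses each start node at most once, so `ν(G_i)` is at most the number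
of non-sinks in `P_i`, and these counts add up to `n - |S(G)|`. If `γ` is constant the sum has the
single term `ν(G)`; if `γ` is injective every `G_i` is a star out of one node, whose matching number
is exactly its number of non-sinks.
-/

open scoped Classical

/-- A matching of a directed graph: a set of directed edges no two of which
share a common start node or a common end node. -/
def IsDiMatching {n : ℕ} (M : Finset (Fin n × Fin n)) : Prop :=
  ∀ e ∈ M, ∀ f ∈ M, e ≠ f → e.1 ≠ f.1 ∧ e.2 ≠ f.2

/-- The matching number of a directed graph with edge set `E`. -/
noncomputable def diMatchingNumber {n : ℕ} (E : Finset (Fin n × Fin n)) : ℕ :=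
  (E.powerset.filter fun M => IsDiMatching M).sup Finset.card

open Finset

namespace IsDiMatching

variable {n : ℕ} {M N : Finset (Fin n × Fin n)}

theorem mono (h : IsDiMatching M) (hNM : N ⊆ M) : IsDiMatching N :=
  fun e he f hf hef => h e (hNM he) f (hNM hf) hef

theorem singleton (e : Fin n × Fin n) : IsDiMatching {e} := by
  intro a ha b hb hab
  rw [mem_singleton] at ha hb
  exact absurd (ha.trans hb.symm) hab

theorem injOn_fst (h : IsDiMatching M) : Set.InjOn Prod.fst (M : Set (Fin n × Fin n)) :=
  fun e he f hf hef => by_contra fun hne => (h e he f hf hne).1 hef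

end IsDiMatching

section MatchingNumber

variable {n : ℕ} {E M : Finset (Fin n × Fin n)}

theorem IsDiMatching.card_le_diMatchingNumber (h : IsDiMatching M) (hME : M ⊆ E) :
    #M ≤ diMatchingNumber E :=
  le_sup (mem_filter.mpr ⟨mem_powerset.mpr hME, h⟩)

theorem diMatchingNumber_le {k : ℕ} (h : ∀ M ⊆ E, IsDiMatching M → #M ≤ k) :
    diMatchingNumber E ≤ k :=
  Finset.sup_le fun M hM => by
    rw [mem_filter, mem_powerset] at hM
    exact h M hM.1 hM.2

theorem exists_isDiMatching_card_eq_diMatchingNumber (E : Finset (Fin n × Fin n)) :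
    ∃ M ⊆ E, IsDiMatching M ∧ #M = diMatchingNumber E := by
  obtain ⟨M, hM, hcard⟩ := exists_mem_eq_sup (E.powerset.filter fun M => IsDiMatching M)
    ⟨∅, mem_filter.mpr ⟨empty_mem_powerset E, by simp [IsDiMatching]⟩⟩ card
  rw [mem_filter, mem_powerset] at hM
  exact ⟨M, hM.1, hM.2, hcard.symm⟩

theorem one_le_diMatchingNumber (hE : E.Nonempty) : 1 ≤ diMatchingNumber E := by
  obtain ⟨e, he⟩ := hE
  simpa using (IsDiMatching.singleton e).card_le_diMatchingNumber (singleton_subset_iff.mpr he)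

theorem diMatchingNumber_le_card_image_fst (E : Finset (Fin n × Fin n)) :
    diMatchingNumber E ≤ #(E.image Prod.fst) :=
  diMatchingNumber_le fun M hME hM => by
    rw [← card_image_of_injOn hM.injOn_fst]
    exact card_le_card (image_subset_image hME)

theorem diMatchingNumber_eq_card_image_fst_of_fst_eq (h : ∀ e ∈ E, ∀ f ∈ E, e.1 = f.1) :
    diMatchingNumber E = #(E.image Prod.fst) := by
  refine (diMatchingNumber_le_card_image_fst E).antisymm ?_
  rcases E.eq_empty_or_nonempty with rfl | hE
  · simp
  · refine le_trans ?_ (one_le_diMatchingNumber hE)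
    rw [card_le_one]
    simp only [mem_image]
    rintro _ ⟨e, he, rfl⟩ _ ⟨f, hf, rfl⟩
    exact h e he f hf

theorem diMatchingNumber_le_sum_fiberwise {ι : Type*} [DecidableEq ι] (s : Finset ι)
    (g : Fin n × Fin n → ι) (hg : ∀ e ∈ E, g e ∈ s) :
    diMatchingNumber E ≤ ∑ i ∈ s, diMatchingNumber (E.filter fun e => g e = i) := by
  obtain ⟨M, hME, hM, hcard⟩ := exists_isDiMatching_card_eq_diMatchingNumber E
  rw [← hcard, card_eq_sum_card_fiberwise fun e he => hg e (hME he)]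
  exact sum_le_sum fun i _ =>
    (hM.mono (filter_subset _ M)).card_le_diMatchingNumber (filter_subset_filter _ hME)

end MatchingNumber

theorem sum_card_image_fst_filter_comp_fst {n : ℕ} {β : Type*} [DecidableEq β]
    (E : Finset (Fin n × Fin n)) (γ : Fin n → β) :
    ∑ c ∈ univ.image γ, #((E.filter fun e => γ e.1 = c).image Prod.fst) = #(E.image Prod.fst) := by
  rw [card_eq_sum_card_fiberwise fun v _ => mem_image_of_mem γ (mem_univ v)]
  exact sum_congr rfl fun c _ => by rw [filter_image]

theorem filter_forall_fst_ne_eq_compl_image_fst {n : ℕ} (E : Finset (Fin n × Fin n)) :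
    univ.filter (fun v : Fin n => ∀ e ∈ E, e.1 ≠ v) = (E.image Prod.fst)ᶜ := by
  ext v
  simp only [mem_filter, mem_univ, true_and, mem_compl, mem_image, not_exists, not_and]

theorem stmt13 (n : ℕ) (E : Finset (Fin n × Fin n)) (γ : Fin n → ℝ) :
    let sinks : Finset (Fin n) :=
      Finset.univ.filter fun v : Fin n => ∀ e ∈ E, e.1 ≠ v
    let total : ℕ :=
      ∑ c ∈ Finset.univ.image γ,
        diMatchingNumber (E.filter fun e => γ e.1 = c)
    diMatchingNumber E ≤ total ∧
    total ≤ n - sinks.card ∧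
    ((∀ i j : Fin n, γ i = γ j) → total = diMatchingNumber E) ∧
    (Function.Injective γ → total = n - sinks.card) := by
  intro sinks total
  have hsinks : n - #sinks = #(E.image Prod.fst) := by
    rw [show sinks = _ from filter_forall_fst_ne_eq_compl_image_fst E, card_compl, Fintype.card_fin,
      Nat.sub_sub_self (card_le_univ _ |>.trans_eq (Fintype.card_fin n))]
  have hle : diMatchingNumber E ≤ total :=
    diMatchingNumber_le_sum_fiberwise _ (fun e => γ e.1) fun e _ => mem_image_of_mem γ (mem_univ _)
  have hge : total ≤ #(E.image Prod.fst) :=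
    (sum_le_sum fun c _ => diMatchingNumber_le_card_image_fst _).trans_eq
      (sum_card_image_fst_filter_comp_fst E γ)
  rw [hsinks]
  refine ⟨hle, hge, fun hconst => hle.antisymm' ?_, fun hinj => ?_⟩
  · have hblock : ∀ c ∈ univ.image γ, (E.filter fun e => γ e.1 = c) = E := by
      simp only [mem_image]
      rintro _ ⟨v, -, rfl⟩
      exact filter_true_of_mem fun e _ => hconst e.1 v
    have hone : #(univ.image γ) ≤ 1 := by
      rw [card_le_one]
      simp only [mem_image]
      rintro _ ⟨u, -, rfl⟩ _ ⟨v, -, rfl⟩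
      exact hconst u v
    calc total = #(univ.image γ) * diMatchingNumber E := by
          rw [← smul_eq_mul, ← sum_const]
          exact sum_congr rfl fun c hc => by rw [hblock c hc]
      _ ≤ diMatchingNumber E := mul_le_of_le_one_left (Nat.zero_le _) hone
  · rw [← sum_card_image_fst_filter_comp_fst E γ]
    refine sum_congr rfl fun c _ => diMatchingNumber_eq_card_image_fst_of_fst_eq ?_
    simp only [mem_filter]
    exact fun e he f hf => hinj (he.2.trans hf.2.symm)
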